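/- arXiv:1903.12171 — 3 statements merged into one kernel-verified Lean document; each statement's English description precedes it below -/
import Mathlib

section
/- Let K = Q(t1, t2, t3, t4) and let the bar involution be the field automorphism sending ti to ti^{-1} for i = 1,...,4. For Z ∈ K define V(Z) := Z + Z̄/(t1t2t3t4) − Z·Z̄·(1−t1)(1−t2)(1−t3)(1−t4)/(t1t2t3t4). Then the bar involution applied to V(Z) equals t1t2t3t4 · V(Z). -/
open MvPolynomial

/-- The field `K = ℚ(t₁,t₂,t₃,t₄)`. -/
noncomputable abbrev K4 : Type := FractionRing (MvPolynomial (Fin 4) ℚ)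

/-- The generators `t₁, t₂, t₃, t₄` of `K = ℚ(t₁,t₂,t₃,t₄)`. -/
noncomputable def tK4 (i : Fin 4) : K4 :=
  algebraMap (MvPolynomial (Fin 4) ℚ) K4 (X i)

/-- The vertex expression `V(Z) = Z + σZ/(t₁t₂t₃t₄) − Z·σZ·∏(1−tᵢ)/(t₁t₂t₃t₄)`. -/
noncomputable def V4 (σ : K4 ≃+* K4) (Z : K4) : K4 :=
  Z + σ Z / (tK4 0 * tK4 1 * tK4 2 * tK4 3)
    - Z * σ Z * ((1 - tK4 0) * (1 - tK4 1) * (1 - tK4 2) * (1 - tK4 3))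
        / (tK4 0 * tK4 1 * tK4 2 * tK4 3)

/-- In `K = ℚ(t₁,t₂,t₃,t₄)` with the bar involution `σ` sending each `tᵢ` to `tᵢ⁻¹`, the
vertex expression satisfies `σ(V(Z)) = t₁t₂t₃t₄ · V(Z)` for every `Z ∈ K`. -/
theorem stmt_2 (σ : K4 ≃+* K4) (hinv : ∀ x : K4, σ (σ x) = x)
    (hσ : ∀ i : Fin 4, σ (tK4 i) = (tK4 i)⁻¹) (Z : K4) :
    σ (V4 σ Z) = tK4 0 * tK4 1 * tK4 2 * tK4 3 * V4 σ Z := by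
  have hinj := IsFractionRing.injective (MvPolynomial (Fin 4) ℚ) K4
  have ht : ∀ i : Fin 4, tK4 i ≠ 0 := fun i h => X_ne_zero i
    (hinj (show algebraMap _ K4 (X i) = algebraMap _ K4 0 by rw [map_zero]; exact h))
  have h0 := ht 0; have h1 := ht 1; have h2 := ht 2; have h3 := ht 3
  simp only [V4, map_add, map_sub, map_mul, map_div₀, map_one, hinv, hσ]
  field_simp
  ring
end

section
/- Work in K = Q(t2, t3, t4) and set t1 := (t2 t3 t4)^{-1}. For n ≥ 1 let Z := Σ_{i=0}^{n-1} t2^i and Z̄ := Σ_{i=0}^{n-1} t2^{-i}. Then (t1^{-1}/(1−t1^{-1}))·[ −Z + Z̄/(t2t3t4) − ((1−t2)(1−t3)(1−t4)/(t2t3t4))·Z·Z̄ ] − (1/(1−t1^{-1}))·[ −Z + Z̄/(t1^2 t2t3t4) − ((1−t2)(1−t3t1)(1−t4t1)/(t1^2 t2t3t4))·Z·Z̄ ] = Σ_{i=1}^{n} (t2^i + t2^{-i}). -/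
open MvPolynomial Finset

set_option maxHeartbeats 2000000

private lemma aux_id5 {F : Type*} [Field F] (t2 t3 t4 u Z Zb : F)
    (h2 : t2 ≠ 0) (h3 : t3 ≠ 0) (h4 : t4 ≠ 0) (hu : u ≠ 0)
    (h1 : (1:F) - t2 * t3 * t4 ≠ 0) (ht2 : (1:F) - t2 ≠ 0)
    (hZ : (1 - t2) * Z = 1 - u) (hZb : u * Zb = t2 * Z) :
    ((t2*t3*t4) / (1 - (t2*t3*t4))) *
        (-Z + Zb / (t2 * t3 * t4)
          - ((1 - t2) * (1 - t3) * (1 - t4) / (t2 * t3 * t4)) * (Z * Zb))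
      - (1 / (1 - (t2*t3*t4))) *
        (-Z + Zb / (((t2*t3*t4)⁻¹) ^ 2 * t2 * t3 * t4)
          - ((1 - t2) * (1 - t3 * (t2*t3*t4)⁻¹) * (1 - t4 * (t2*t3*t4)⁻¹) /
              (((t2*t3*t4)⁻¹) ^ 2 * t2 * t3 * t4)) * (Z * Zb))
      = t2 * Z + t2⁻¹ * Zb := by
  have h234 : t2 * t3 * t4 ≠ 0 := mul_ne_zero (mul_ne_zero h2 h3) h4
  have key : ((t2*t3*t4)⁻¹) ^ 2 * t2 * t3 * t4 = (t2*t3*t4)⁻¹ := by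
    field_simp
  rw [key]
  have hZval : Z = (1 - u) / (1 - t2) := by rw [eq_div_iff ht2]; linear_combination hZ
  have hZbval : Zb = t2 * ((1 - u) / (1 - t2)) / u := by
    rw [eq_div_iff hu]; linear_combination hZb + t2 * hZval
  rw [hZval, hZbval]
  simp only [div_inv_eq_mul]
  field_simp
  have H : ∀ a b c f d e : F, d ≠ 0 → e ≠ 0 →
      (a * e - b * d) * f = c * (d * e) → (a / d - b / e) * f = c := by
    intro a b c f d e hd he h
    field_simp
    linear_combination h
  ring

/-- The field `K = ℚ(t₂,t₃,t₄)`. -/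
noncomputable abbrev K5 : Type := FractionRing (MvPolynomial (Fin 3) ℚ)

/-- The generators `t₂, t₃, t₄` of `K = ℚ(t₂,t₃,t₄)`. -/
noncomputable def tK5 (i : Fin 3) : K5 :=
  algebraMap (MvPolynomial (Fin 3) ℚ) K5 (X i)

private lemma tK5_ne_zero (i : Fin 3) : tK5 i ≠ 0 := by
  simp [tK5, (IsFractionRing.injective (MvPolynomial (Fin 3) ℚ) K5).ne_iff' (map_zero _),
    MvPolynomial.X_ne_zero]

private lemma map_ne5 (p q : MvPolynomial (Fin 3) ℚ) (h : p ≠ q) :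
    algebraMap (MvPolynomial (Fin 3) ℚ) K5 p ≠ algebraMap (MvPolynomial (Fin 3) ℚ) K5 q :=
  fun he => h (IsFractionRing.injective (MvPolynomial (Fin 3) ℚ) K5 he)

/-- The character computation for the `n`-fold thickening of the zero section of the local
curve `Tot_{ℙ¹}(𝒪 ⊕ 𝒪(−1) ⊕ 𝒪(−1))`: in `K = ℚ(t₂,t₃,t₄)` with `t₁ := (t₂t₃t₄)⁻¹`,
`Z = Σ_{i=0}^{n-1} t₂ⁱ`, `Z̄ = Σ_{i=0}^{n-1} t₂⁻ⁱ`, the redistributed edge expression equals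
`Σ_{i=1}^{n} (t₂ⁱ + t₂⁻ⁱ)`. -/
theorem stmt_5 (n : ℕ) (hn : 1 ≤ n) :
    let t2 : K5 := tK5 0
    let t3 : K5 := tK5 1
    let t4 : K5 := tK5 2
    let t1 : K5 := (t2 * t3 * t4)⁻¹
    let Z : K5 := ∑ i ∈ Finset.range n, t2 ^ i
    let Zb : K5 := ∑ i ∈ Finset.range n, (t2⁻¹) ^ i
    (t1⁻¹ / (1 - t1⁻¹)) *
        (-Z + Zb / (t2 * t3 * t4)
          - ((1 - t2) * (1 - t3) * (1 - t4) / (t2 * t3 * t4)) * (Z * Zb))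
      - (1 / (1 - t1⁻¹)) *
        (-Z + Zb / (t1 ^ 2 * t2 * t3 * t4)
          - ((1 - t2) * (1 - t3 * t1) * (1 - t4 * t1) / (t1 ^ 2 * t2 * t3 * t4)) * (Z * Zb))
      = ∑ i ∈ Finset.range n, (t2 ^ (i + 1) + (t2⁻¹) ^ (i + 1)) := by
  intro t2 t3 t4 t1 Z Zb
  have h2 : t2 ≠ 0 := tK5_ne_zero 0
  have h3 : t3 ≠ 0 := tK5_ne_zero 1
  have h4 : t4 ≠ 0 := tK5_ne_zero 2
  have h234 : t2 * t3 * t4 ≠ 0 := mul_ne_zero (mul_ne_zero h2 h3) h4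
  have h1 : (1 : K5) - t2 * t3 * t4 ≠ 0 := by
    intro h
    have he : t2 * t3 * t4 = 1 := (sub_eq_zero.mp h).symm
    refine map_ne5 (X 0 * X 1 * X 2) 1 ?_ ?_
    · intro h'
      have := congrArg (MvPolynomial.eval (fun _ => (0:ℚ))) h'
      simp at this
    · rw [map_mul, map_mul, map_one]; exact he
  have ht2 : (1 : K5) - t2 ≠ 0 := by
    intro h
    have he : t2 = 1 := (sub_eq_zero.mp h).symm
    refine map_ne5 (X 0) 1 ?_ ?_
    · intro h'
      have := congrArg (MvPolynomial.eval (fun _ => (0:ℚ))) h'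
      simp at this
    · rw [map_one]; exact he
  have hpn : t2 ^ n ≠ 0 := pow_ne_zero _ h2
  have hZdef : Z = ∑ i ∈ Finset.range n, t2 ^ i := rfl
  have hZbdef : Zb = ∑ i ∈ Finset.range n, (t2⁻¹) ^ i := rfl
  have ht1def : t1 = (t2 * t3 * t4)⁻¹ := rfl
  have hZ : (1 - t2) * Z = 1 - t2 ^ n := by
    rw [hZdef]; linear_combination -(geom_sum_mul t2 n)
  have hZbZ : t2 ^ n * Zb = t2 * Z := by
    rw [hZdef, hZbdef, Finset.mul_sum, Finset.mul_sum,
      ← Finset.sum_range_reflect (fun i => t2 * t2 ^ i) n]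
    refine Finset.sum_congr rfl fun i hi => ?_
    have hi' : i < n := Finset.mem_range.mp hi
    rw [inv_pow, ← pow_sub₀ t2 h2 hi'.le, ← pow_succ']
    congr 1
    omega
  have hRHS : ∑ i ∈ Finset.range n, (t2 ^ (i + 1) + (t2⁻¹) ^ (i + 1))
      = t2 * Z + t2⁻¹ * Zb := by
    rw [hZdef, hZbdef, Finset.mul_sum, Finset.mul_sum, ← Finset.sum_add_distrib]
    refine Finset.sum_congr rfl fun i _ => ?_
    rw [pow_succ, pow_succ]; ring
  rw [hRHS, ht1def, inv_inv]
  exact aux_id5 t2 t3 t4 (t2 ^ n) Z Zb h2 h3 h4 hpn h1 ht2 hZ hZbZ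
end

section
/- Let T = {(t1,t2,t3,t4) ∈ (C*)^4 : t1t2t3t4 = 1} act on C[x1,x2,x3,x4] by scaling t·xi = ti·xi. Then every T-invariant ideal I ⊆ C[x1,x2,x3,x4] is generated by finitely many elements of the form x1^{a} x2^{b} x3^{c} x4^{d} · f(x1x2x3x4), where a,b,c,d ∈ Z_{≥0} and f is a one-variable polynomial with constant coefficient 1. -/
open MvPolynomial

/-- The algebra automorphism of `ℂ[x₁,x₂,x₃,x₄]` given by scaling `xᵢ ↦ tᵢ·xᵢ`. -/
noncomputable def torusScale (t : Fin 4 → ℂˣ) :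
    MvPolynomial (Fin 4) ℂ →ₐ[ℂ] MvPolynomial (Fin 4) ℂ :=
  aeval fun i => C (t i : ℂ) * X i

noncomputable abbrev R4 := MvPolynomial (Fin 4) ℂ

lemma prod_X_pow_univ (u : Fin 4 →₀ ℕ) :
    (∏ i, (X i : MvPolynomial (Fin 4) ℂ) ^ u i) = monomial u 1 := by
  rw [← prod_X_pow_eq_monomial]
  exact (Finset.prod_subset (Finset.subset_univ _)
    (by intro i _ h; simp [Finsupp.notMem_support_iff.mp h])).symm

lemma torusScale_monomial (t : Fin 4 → ℂˣ) (u : Fin 4 →₀ ℕ) (c : ℂ) :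
    torusScale t (monomial u c) = monomial u ((∏ i, (t i : ℂ) ^ u i) * c) := by
  rw [torusScale, aeval_monomial]
  simp only [mul_pow, ← C_pow, Finsupp.prod_mul]
  rw [Finsupp.prod_fintype _ _ (fun i => by simp), Finsupp.prod_fintype _ _ (fun i => by simp)]
  rw [← map_prod C (fun i => (t i : ℂ) ^ u i) Finset.univ, prod_X_pow_univ]
  rw [algebraMap_eq, ← mul_assoc, ← C_mul, C_mul_monomial, mul_one, mul_comm c]

/-- If a polynomial with coefficients in a `ℂ`-algebra takes values in an ideal at every
nonzero scalar, then all its coefficients lie in the ideal. -/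
lemma coeff_mem_of_eval_mem {R : Type*} [CommRing R] [Algebra ℂ R]
    (I : Ideal R) (Q : Polynomial R)
    (h : ∀ s : ℂ, s ≠ 0 → Polynomial.eval (algebraMap ℂ R s) Q ∈ I) (j : ℕ) :
    Q.coeff j ∈ I := by
  set mk := Ideal.Quotient.mk I
  set Qb := Q.map mk with hQb
  have key : ∀ s : ℂ, s ≠ 0 → Qb.eval (algebraMap ℂ (R ⧸ I) s) = 0 := by
    intro s hs
    have : algebraMap ℂ (R ⧸ I) s = mk (algebraMap ℂ R s) :=
      (IsScalarTower.algebraMap_apply ℂ R (R ⧸ I) s)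
    rw [this, hQb, Polynomial.eval_map, Polynomial.eval₂_at_apply]
    exact Ideal.Quotient.eq_zero_iff_mem.mpr (h s hs)
  have hc : ∀ j, Qb.coeff j = 0 := by
    intro j
    rw [← Module.forall_dual_apply_eq_zero_iff ℂ]
    intro φ
    set q : Polynomial ℂ := ∑ i ∈ Finset.range (Qb.natDegree + 1),
      Polynomial.C (φ (Qb.coeff i)) * Polynomial.X ^ i with hq
    have hqe : ∀ s : ℂ, s ≠ 0 → q.eval s = 0 := by
      intro s hs
      have := key s hs
      rw [Polynomial.eval_eq_sum_range] at this
      have : φ (∑ i ∈ Finset.range (Qb.natDegree + 1),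
          Qb.coeff i * algebraMap ℂ (R ⧸ I) s ^ i) = 0 := by rw [this]; simp
      rw [map_sum] at this
      rw [hq, Polynomial.eval_finset_sum]
      rw [← this]
      refine Finset.sum_congr rfl fun i _ => ?_
      rw [mul_comm (Qb.coeff i), ← map_pow, ← Algebra.smul_def, map_smul]
      rw [Polynomial.eval_mul, Polynomial.eval_pow, Polynomial.eval_C, Polynomial.eval_X,
        smul_eq_mul, mul_comm]
    have hq0 : q = 0 := by
      apply Polynomial.eq_zero_of_infinite_isRoot
      apply Set.Infinite.mono (s := {(0 : ℂ)}ᶜ)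
      · intro s hs; exact hqe s hs
      · exact Set.Finite.infinite_compl (Set.finite_singleton 0)
    by_cases hj : j ≤ Qb.natDegree
    · have : q.coeff j = φ (Qb.coeff j) := by
        rw [hq]
        rw [Polynomial.finset_sum_coeff]
        simp only [Polynomial.coeff_C_mul, Polynomial.coeff_X_pow, mul_ite, mul_one, mul_zero]
        rw [Finset.sum_ite_eq (Finset.range (Qb.natDegree + 1))]
        simp [Nat.lt_succ_of_le hj]
      rw [← this, hq0]; simp
    · rw [Polynomial.coeff_eq_zero_of_natDegree_lt (lt_of_not_ge hj)]; simp
  have := hc j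
  rw [hQb, Polynomial.coeff_map] at this
  exact Ideal.Quotient.eq_zero_iff_mem.mp this

/-- The weight of a monomial for the `j`-th one-parameter subgroup. -/
def wdeg (j : Fin 4) (u : Fin 4 →₀ ℕ) : ℤ := (u j : ℤ) - u 3

/-- The weight-`c` component of a polynomial for the `j`-th one-parameter subgroup. -/
noncomputable def comp (j : Fin 4) (c : ℤ) (p : R4) : R4 :=
  ∑ u ∈ p.support.filter (fun u => wdeg j u = c), monomial u (coeff u p)

lemma coeff_comp (j : Fin 4) (c : ℤ) (p : R4) (v : Fin 4 →₀ ℕ) :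
    coeff v (comp j c p) = if wdeg j v = c then coeff v p else 0 := by
  rw [comp]
  rw [MvPolynomial.coeff_sum]
  simp only [coeff_monomial]
  rw [Finset.sum_ite_eq' (p.support.filter (fun u => wdeg j u = c)) v (fun u => coeff u p)]
  by_cases h1 : wdeg j v = c
  · by_cases h2 : v ∈ p.support
    · simp [Finset.mem_filter, h1, h2]
    · simp only [Finset.mem_filter, h1, h2, false_and, if_false, if_true]
      simp [MvPolynomial.notMem_support_iff.mp h2]
  · simp [Finset.mem_filter, h1]

lemma support_comp (j : Fin 4) (c : ℤ) (p : R4) :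
    (comp j c p).support ⊆ p.support.filter (fun u => wdeg j u = c) := by
  intro v hv
  rw [MvPolynomial.mem_support_iff, coeff_comp] at hv
  by_cases h1 : wdeg j v = c
  · simp only [h1, if_true] at hv
    exact Finset.mem_filter.mpr ⟨MvPolynomial.mem_support_iff.mpr hv, h1⟩
  · simp [h1] at hv

lemma sum_comp (j : Fin 4) (p : R4) :
    ∑ c ∈ p.support.image (wdeg j), comp j c p = p := by
  conv_rhs => rw [← support_sum_monomial_coeff p]
  exact Finset.sum_fiberwise_of_maps_to (fun u hu => Finset.mem_image_of_mem _ hu) _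

/-- The one-parameter subgroup scaling `x_j` by `s` and `x₄` by `s⁻¹`. -/
noncomputable def tj (j : Fin 4) (s : ℂˣ) : Fin 4 → ℂˣ :=
  fun i => if i = j then s else if i = (3 : Fin 4) then s⁻¹ else 1

lemma prod_tj_pow (j : Fin 4) (hj : j ≠ 3) (s : ℂˣ) (u : Fin 4 → ℕ) :
    ∏ i, (tj j s i) ^ u i = s ^ u j * (s⁻¹) ^ u 3 := by
  have h3 : (3 : Fin 4) ∈ Finset.univ.erase j :=
    Finset.mem_erase.mpr ⟨(Ne.symm hj), Finset.mem_univ _⟩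
  rw [← Finset.mul_prod_erase Finset.univ _ (Finset.mem_univ j),
    ← Finset.mul_prod_erase _ _ h3]
  have h1 : tj j s j = s := by simp [tj]
  have h2 : tj j s 3 = s⁻¹ := by simp [tj, Ne.symm hj]
  rw [h1, h2]
  rw [Finset.prod_eq_one, mul_one]
  intro i hi
  simp only [Finset.mem_erase] at hi
  simp [tj, hi.1, hi.2.1]

lemma prod_tj (j : Fin 4) (hj : j ≠ 3) (s : ℂˣ) : ∏ i, tj j s i = 1 := by
  have := prod_tj_pow j hj s (fun _ => 1)
  simpa using this

/-- Key step: each weight component of an element of a torus-invariant ideal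
stays in the ideal. -/
lemma comp_mem (I : Ideal R4)
    (hI : ∀ t : Fin 4 → ℂˣ, (∏ i, t i) = 1 → ∀ p ∈ I, torusScale t p ∈ I)
    (j : Fin 4) (hj : j ≠ 3) (c : ℤ) (p : R4) (hp : p ∈ I) : comp j c p ∈ I := by
  classical
  set N := p.support.sup (fun u => u 3) with hN
  set Q : Polynomial R4 := ∑ u ∈ p.support,
    Polynomial.monomial (u j + (N - u 3)) ((monomial u (coeff u p)) : R4) with hQ
  have heval : ∀ s : ℂ, s ≠ 0 → Polynomial.eval (algebraMap ℂ R4 s) Q ∈ I := by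
    intro s hs
    set su : ℂˣ := Units.mk0 s hs with hsu
    have key : Polynomial.eval (algebraMap ℂ R4 s) Q
        = C (s ^ N) * torusScale (tj j su) p := by
      have hp' : torusScale (tj j su) p = ∑ u ∈ p.support,
          monomial u ((∏ i, (tj j su i : ℂ) ^ u i) * coeff u p) := by
        conv_lhs => rw [← support_sum_monomial_coeff p]
        rw [map_sum]
        exact Finset.sum_congr rfl fun u _ => torusScale_monomial _ _ _
      rw [hp', hQ, Polynomial.eval_finset_sum, Finset.mul_sum]
      refine Finset.sum_congr rfl fun u hu => ?_
      have hle : u 3 ≤ N := Finset.le_sup (f := fun u => u 3) hu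
      rw [Polynomial.eval_monomial, C_mul_monomial]
      have hprod : (∏ i, (tj j su i : ℂ) ^ u i) = s ^ u j * (s⁻¹) ^ u 3 := by
        have := congrArg (Units.coeHom ℂ) (prod_tj_pow j hj su ⇑u)
        simpa [hsu] using this
      rw [hprod, algebraMap_eq, ← C_pow, mul_comm (monomial u (coeff u p)), C_mul_monomial]
      congr 1
      rw [pow_add, pow_sub₀ _ hs hle, inv_pow]
      field_simp
    rw [key]
    exact Ideal.mul_mem_left _ _ (hI _ (prod_tj j hj su) p hp)
  have hcoeff : ∀ m : ℕ, Q.coeff m = ∑ u ∈ p.support.filter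
      (fun u => u j + (N - u 3) = m), monomial u (coeff u p) := by
    intro m
    rw [hQ, Polynomial.finset_sum_coeff, Finset.sum_filter]
    simp [Polynomial.coeff_monomial]
  by_cases hc : 0 ≤ c + N
  · have hkey : comp j c p = Q.coeff (c + N).toNat := by
      rw [hcoeff, comp]
      refine Finset.sum_congr (Finset.filter_congr fun u hu => ?_) (fun _ _ => rfl)
      have hle : u 3 ≤ N := Finset.le_sup (f := fun u => u 3) hu
      have h1 : ((c + N).toNat : ℤ) = c + N := Int.toNat_of_nonneg hc
      rw [wdeg]
      constructor <;> intro h <;> omega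
    rw [hkey]
    exact coeff_mem_of_eval_mem I Q heval _
  · rw [comp, Finset.filter_false_of_mem, Finset.sum_empty]
    · exact zero_mem I
    · intro u hu h
      have hle : u 3 ≤ N := Finset.le_sup (f := fun u => u 3) hu
      rw [wdeg] at h
      omega

/-- A polynomial is `T`-homogeneous if all its monomials share the same weights. -/
def Homog (q : R4) : Prop :=
  ∀ u ∈ q.support, ∀ v ∈ q.support, ∀ j : Fin 4, wdeg j u = wdeg j v

noncomputable def one1 : Fin 4 →₀ ℕ := Finsupp.equivFunOnFinite.symm (fun _ => 1)

@[simp] lemma one1_apply (i : Fin 4) : one1 i = 1 := rfl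

lemma prod_X_eq : (∏ i, (X i : MvPolynomial (Fin 4) ℂ)) = monomial one1 1 := by
  rw [← prod_X_pow_univ one1]
  simp

lemma homog_comp3 (p : R4) (c0 c1 c2 : ℤ) :
    Homog (comp 2 c2 (comp 1 c1 (comp 0 c0 p))) := by
  intro u hu v hv j
  have h2u := (Finset.mem_filter.mp (support_comp _ _ _ hu)).2
  have hu1 := (Finset.mem_filter.mp (support_comp _ _ _ hu)).1
  have h1u := (Finset.mem_filter.mp (support_comp _ _ _ hu1)).2
  have hu0 := (Finset.mem_filter.mp (support_comp _ _ _ hu1)).1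
  have h0u := (Finset.mem_filter.mp (support_comp _ _ _ hu0)).2
  have h2v := (Finset.mem_filter.mp (support_comp _ _ _ hv)).2
  have hv1 := (Finset.mem_filter.mp (support_comp _ _ _ hv)).1
  have h1v := (Finset.mem_filter.mp (support_comp _ _ _ hv1)).2
  have hv0 := (Finset.mem_filter.mp (support_comp _ _ _ hv1)).1
  have h0v := (Finset.mem_filter.mp (support_comp _ _ _ hv0)).2
  fin_cases j
  · exact h0u.trans h0v.symm
  · exact h1u.trans h1v.symm
  · exact h2u.trans h2v.symm
  · simp [wdeg]

/-- Every element of a torus-invariant ideal lies in the span of the nonzero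
homogeneous elements of the ideal. -/
lemma mem_span_homog (I : Ideal R4)
    (hI : ∀ t : Fin 4 → ℂˣ, (∏ i, t i) = 1 → ∀ p ∈ I, torusScale t p ∈ I)
    (p : R4) (hp : p ∈ I) :
    p ∈ Ideal.span {q : R4 | q ∈ I ∧ q ≠ 0 ∧ Homog q} := by
  rw [← sum_comp 0 p]
  refine Submodule.sum_mem _ fun c0 _ => ?_
  have h0 : comp 0 c0 p ∈ I := comp_mem I hI 0 (by decide) c0 p hp
  rw [← sum_comp 1 (comp 0 c0 p)]
  refine Submodule.sum_mem _ fun c1 _ => ?_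
  have h1 : comp 1 c1 (comp 0 c0 p) ∈ I := comp_mem I hI 1 (by decide) c1 _ h0
  rw [← sum_comp 2 (comp 1 c1 (comp 0 c0 p))]
  refine Submodule.sum_mem _ fun c2 _ => ?_
  have h2 : comp 2 c2 (comp 1 c1 (comp 0 c0 p)) ∈ I := comp_mem I hI 2 (by decide) c2 _ h1
  by_cases hz : comp 2 c2 (comp 1 c1 (comp 0 c0 p)) = 0
  · rw [hz]; exact zero_mem _
  · exact Ideal.subset_span ⟨h2, hz, homog_comp3 p c0 c1 c2⟩

/-- Structure of a nonzero homogeneous polynomial: a monomial times a polynomial in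
`x₁x₂x₃x₄` with constant coefficient `1`, up to a nonzero scalar. -/
lemma homog_structure (h : R4) (hh : Homog h) (h0 : h ≠ 0) :
    ∃ (a : Fin 4 → ℕ) (f : Polynomial ℂ) (c : ℂ),
      c ≠ 0 ∧ f.coeff 0 = 1 ∧
      h = C c * ((∏ i, (X i : MvPolynomial (Fin 4) ℂ) ^ a i) *
        Polynomial.aeval (∏ i, (X i : MvPolynomial (Fin 4) ℂ)) f) := by
  classical
  have hsupp : h.support.Nonempty := MvPolynomial.support_nonempty.mpr h0
  have himg : (h.support.image (fun u => u 3)).Nonempty := hsupp.image _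
  set m0 := (h.support.image (fun u => u 3)).min' himg with hm0
  have hmem := Finset.min'_mem _ himg
  rw [← hm0, Finset.mem_image] at hmem
  obtain ⟨u0, hu0, hu03⟩ := hmem
  have hmin : ∀ u ∈ h.support, m0 ≤ u 3 := fun u hu =>
    Finset.min'_le _ _ (Finset.mem_image_of_mem _ hu)
  set c := coeff u0 h with hc
  have hc0 : c ≠ 0 := MvPolynomial.mem_support_iff.mp hu0
  have hinj : ∀ u ∈ h.support, ∀ v ∈ h.support, u 3 = v 3 → u = v := by
    intro u hu v hv h33
    ext i
    have := hh u hu v hv i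
    rw [wdeg, wdeg] at this
    omega
  have hshape : ∀ u ∈ h.support, ∀ i, u i = u0 i + (u 3 - m0) := by
    intro u hu i
    have h1 := hh u hu u0 hu0 i
    rw [wdeg, wdeg, hu03] at h1
    have h2 := hmin u hu
    omega
  refine ⟨⇑u0, ∑ u ∈ h.support, Polynomial.C (c⁻¹ * coeff u h) * Polynomial.X ^ (u 3 - m0),
    c, hc0, ?_, ?_⟩
  · rw [Polynomial.finset_sum_coeff]
    have : ∀ u ∈ h.support,
        (Polynomial.C (c⁻¹ * coeff u h) * Polynomial.X ^ (u 3 - m0)).coeff 0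
        = if u = u0 then c⁻¹ * coeff u h else 0 := by
      intro u hu
      rw [Polynomial.coeff_C_mul, Polynomial.coeff_X_pow]
      by_cases he : u = u0
      · subst he
        simp [hu03]
      · have : u 3 ≠ m0 := fun h33 => he (hinj u hu u0 hu0 (by rw [h33, hu03]))
        have := hmin u hu
        have hne : u 3 - m0 ≠ 0 := by omega
        simp [Ne.symm hne, he]
    rw [Finset.sum_congr rfl this, Finset.sum_ite_eq' h.support u0
      (fun u => c⁻¹ * coeff u h)]
    simp [hu0, inv_mul_cancel₀ hc0]
    exact inv_mul_cancel₀ hc0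
  · rw [prod_X_pow_univ, map_sum, Finset.mul_sum, Finset.mul_sum]
    conv_lhs => rw [← support_sum_monomial_coeff h]
    refine Finset.sum_congr rfl fun u hu => ?_
    rw [map_mul, map_pow, Polynomial.aeval_X, Polynomial.aeval_C, prod_X_eq,
      monomial_pow, one_pow, algebraMap_eq]
    rw [C_mul_monomial, monomial_mul, C_mul_monomial]
    refine (MvPolynomial.monomial_eq_monomial_iff _ _ _ _).mpr (Or.inl ⟨?_, ?_⟩)
    · ext i
      have := hshape u hu i
      simp only [Finsupp.coe_add, Pi.add_apply, Finsupp.coe_smul, Pi.smul_apply, one1_apply,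
        smul_eq_mul, mul_one]
      omega
    · field_simp

/-- Every ideal of `ℂ[x₁,x₂,x₃,x₄]` invariant under the Calabi–Yau torus
`T = {t ∈ (ℂ*)⁴ : t₁t₂t₃t₄ = 1}` (acting by `xᵢ ↦ tᵢ·xᵢ`) is generated by finitely many
elements of the form `x₁^a x₂^b x₃^c x₄^d · f(x₁x₂x₃x₄)`, where `f` is a one-variable
polynomial with constant coefficient `1`. -/
theorem stmt_11 (I : Ideal (MvPolynomial (Fin 4) ℂ))
    (hI : ∀ t : Fin 4 → ℂˣ, (∏ i, t i) = 1 → ∀ p ∈ I, torusScale t p ∈ I) :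
    ∃ (n : ℕ) (a : Fin n → Fin 4 → ℕ) (f : Fin n → Polynomial ℂ),
      (∀ m : Fin n, (f m).coeff 0 = 1) ∧
      I = Ideal.span (Set.range fun m : Fin n =>
        (∏ i, (X i : MvPolynomial (Fin 4) ℂ) ^ a m i) *
          Polynomial.aeval (∏ i, (X i : MvPolynomial (Fin 4) ℂ)) (f m)) := by
  classical
  set S : Set R4 := {q : R4 | q ∈ I ∧ q ≠ 0 ∧ Homog q} with hS
  -- I is finitely generated
  obtain ⟨G, hG⟩ : I.FG := IsNoetherian.noetherian I
  -- each generator is in the span of finitely many elements of S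
  have hGS : ∀ g ∈ G, ∃ T : Finset R4, ↑T ⊆ S ∧ g ∈ Ideal.span (T : Set R4) := by
    intro g hg
    have : g ∈ Ideal.span S := mem_span_homog I hI g (hG ▸ Ideal.subset_span hg)
    exact Submodule.mem_span_finite_of_mem_span this
  choose T hTS hTmem using hGS
  set TT : Finset R4 := G.attach.biUnion (fun g => T g.1 g.2) with hTT
  have hTTS : (TT : Set R4) ⊆ S := by
    intro x hx
    rw [hTT] at hx
    simp only [Finset.coe_biUnion, Set.mem_iUnion, Finset.mem_coe] at hx
    obtain ⟨g, _, hg2⟩ := hx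
    exact hTS g.1 g.2 hg2
  have hITT : I = Ideal.span (TT : Set R4) := by
    apply le_antisymm
    · rw [← hG, Ideal.span_le]
      intro g hg
      refine Ideal.span_mono ?_ (hTmem g hg)
      intro x hx
      rw [hTT]
      simp only [Finset.coe_biUnion, Set.mem_iUnion, Finset.mem_coe]
      exact ⟨⟨g, hg⟩, Finset.mem_attach _ _, hx⟩
    · rw [Ideal.span_le]
      intro x hx
      exact (hTTS hx).1
  -- enumerate TT and extract the structure of each element
  set n := TT.card with hn
  set e : Fin n → R4 := fun m => (TT.equivFin.symm m : R4) with he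
  have heS : ∀ m, e m ∈ S := fun m => hTTS (TT.equivFin.symm m).2
  have hstruct : ∀ m : Fin n, ∃ (a : Fin 4 → ℕ) (f : Polynomial ℂ) (c : ℂ),
      c ≠ 0 ∧ f.coeff 0 = 1 ∧
      e m = C c * ((∏ i, (X i : MvPolynomial (Fin 4) ℂ) ^ a i) *
        Polynomial.aeval (∏ i, (X i : MvPolynomial (Fin 4) ℂ)) f) := by
    intro m
    exact homog_structure (e m) (heS m).2.2 (heS m).2.1
  choose a f c hc0 hf1 heq using hstruct
  refine ⟨n, a, f, hf1, ?_⟩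
  set gens : Fin n → R4 := fun m =>
    (∏ i, (X i : MvPolynomial (Fin 4) ℂ) ^ a m i) *
      Polynomial.aeval (∏ i, (X i : MvPolynomial (Fin 4) ℂ)) (f m) with hgens
  rw [hITT]
  apply le_antisymm
  · rw [Ideal.span_le]
    intro x hx
    rw [Finset.mem_coe] at hx
    set m := TT.equivFin ⟨x, hx⟩ with hm
    have hex : e m = x := by
      show ((TT.equivFin.symm (TT.equivFin ⟨x, hx⟩) : TT) : R4) = x
      rw [Equiv.symm_apply_apply]
    have : x = C (c m) * gens m := by rw [← hex, heq]
    rw [this]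
    exact Ideal.mul_mem_left _ _ (Ideal.subset_span (Set.mem_range_self m))
  · rw [Ideal.span_le]
    intro x hx
    obtain ⟨m, rfl⟩ := hx
    have hgm : gens m = C (c m)⁻¹ * e m := by
      rw [heq, ← mul_assoc, ← C_mul, inv_mul_cancel₀ (hc0 m), C_1, one_mul]
    show gens m ∈ Ideal.span (TT : Set R4)
    rw [hgm]
    exact Ideal.mul_mem_left _ _ (Ideal.subset_span (Finset.mem_coe.mpr
      (TT.equivFin.symm m).2))
end
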